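/- arXiv:1303.6830 — 2 statements merged into one kernel-verified Lean document; each statement's English description precedes it below -/
import Mathlib

section
/- Let γ > 0 and 0 < a < b < 1. Define S(u,v) = ∫_u^v e^{-1/(2z)}·√(z/(1−z)) dz and P(y) = S(a,y)/S(a,b) for y ∈ [a,b]. Then P(a) = 0, P(b) = 1, P is strictly increasing on [a,b], and for every y ∈ (a,b), P is twice differentiable at y with −γ y·P'(y) + 2γ y³(1−y)·P''(y) = 0. -/
/-!
`P` is a normalized integral of the positive scale density `Q`, which gives the boundary values
and strict monotonicity, and `P' = Q / S(a,b)`, `P'' = Q' / S(a,b)`. The adjoint equation then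
reduces to `y Q = 2 y³ (1 - y) Q'`, i.e. to the logarithmic derivative
`(log Q)' = 1 / (2y²) + 1 / (2y(1 - y)) = 1 / (2y²(1 - y))`.
-/

/-- Optimal homodyne scale density Q(z) = e^{-1/(2z)}·√(z/(1−z)). -/
noncomputable def Qhom (z : ℝ) : ℝ :=
  Real.exp (-1 / (2 * z)) * Real.sqrt (z / (1 - z))

/-- Optimal homodyne scale integral S(u,v) = ∫_u^v Q(z) dz. -/
noncomputable def Shom (u v : ℝ) : ℝ := ∫ z in u..v, Qhom z

open Set

section IntegralOfContinuous

variable {f : ℝ → ℝ} {a b : ℝ}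

theorem strictMonoOn_integral_of_pos (hf : ContinuousOn f (Icc a b))
    (hpos : ∀ x ∈ Ioo a b, 0 < f x) :
    StrictMonoOn (fun y => ∫ z in a..y, f z) (Icc a b) := by
  intro x hx y hy hxy
  have hint : ∀ v ∈ Icc a b, IntervalIntegrable f MeasureTheory.volume a v := fun v hv =>
    (hf.mono (uIcc_subset_Icc (left_mem_Icc.2 (hv.1.trans hv.2)) hv)).intervalIntegrable
  have hxy_pos : 0 < ∫ z in x..y, f z :=
    intervalIntegral.intervalIntegral_pos_of_pos_on
      (hf.mono (uIcc_subset_Icc hx hy)).intervalIntegrable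
      (fun z hz => hpos z ⟨hx.1.trans_lt hz.1, hz.2.trans_le hy.2⟩) hxy
  have hsub := intervalIntegral.integral_interval_sub_left (hint y hy) (hint x hx)
  show (∫ z in a..x, f z) < ∫ z in a..y, f z
  linarith

theorem hasDerivAt_integral_of_continuousOn (hf : ContinuousOn f (Icc a b)) {y : ℝ}
    (hy : y ∈ Ioo a b) : HasDerivAt (fun u => ∫ z in a..u, f z) (f y) y :=
  intervalIntegral.integral_hasDerivAt_right
    (hf.mono (uIcc_subset_Icc (left_mem_Icc.2 (hy.1.trans hy.2).le) (Ioo_subset_Icc_self hy))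
      ).intervalIntegrable
    ((hf.mono Ioo_subset_Icc_self).stronglyMeasurableAtFilter isOpen_Ioo y hy)
    (hf.continuousAt (Icc_mem_nhds hy.1 hy.2))

theorem hasDerivAt_deriv_integral_div_const (hf : ContinuousOn f (Icc a b)) (c : ℝ) {y f' : ℝ}
    (hy : y ∈ Ioo a b) (hf' : HasDerivAt f f' y) :
    HasDerivAt (deriv fun u => (∫ z in a..u, f z) / c) (f' / c) y := by
  have hderiv : deriv (fun u => (∫ z in a..u, f z) / c) =ᶠ[nhds y] fun u => f u / c :=
    Filter.eventuallyEq_of_mem (Ioo_mem_nhds hy.1 hy.2) fun u hu =>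
      ((hasDerivAt_integral_of_continuousOn hf hu).div_const c).deriv
  exact (hf'.div_const c).congr_of_eventuallyEq hderiv

end IntegralOfContinuous

theorem Qhom_pos {z : ℝ} (h0 : 0 < z) (h1 : z < 1) : 0 < Qhom z :=
  mul_pos (Real.exp_pos _) (Real.sqrt_pos.2 (div_pos h0 (by linarith)))

theorem hasDerivAt_Qhom {y : ℝ} (h0 : 0 < y) (h1 : y < 1) :
    HasDerivAt Qhom (Qhom y / (2 * y ^ 2 * (1 - y))) y := by
  have h1y : 1 - y ≠ 0 := by linarith
  have hratio : HasDerivAt (fun z => z / (1 - z)) (1 / (1 - y) ^ 2) y := by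
    refine ((hasDerivAt_id y).div ((hasDerivAt_const y 1).sub (hasDerivAt_id y)) h1y
      ).congr_deriv ?_
    simp only [Pi.sub_apply, id_eq]
    field_simp
    ring
  have hexponent : HasDerivAt (fun z => -1 / (2 * z)) (1 / (2 * y ^ 2)) y := by
    refine ((hasDerivAt_const y (-1)).div ((hasDerivAt_id y).const_mul 2) (by positivity)
      ).congr_deriv ?_
    simp only [id_eq]
    field_simp
    ring
  have hsq : Real.sqrt (y / (1 - y)) ^ 2 = y / (1 - y) := Real.sq_sqrt (by positivity)
  have hs : 0 < Real.sqrt (y / (1 - y)) := Real.sqrt_pos.2 (by positivity)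
  refine (hexponent.exp.mul (hratio.sqrt (by positivity))).congr_deriv ?_
  unfold Qhom
  field_simp
  rw [hsq]
  field_simp
  ring

theorem continuousOn_Qhom : ContinuousOn Qhom (Ioo 0 1) := fun _ hy =>
  (hasDerivAt_Qhom hy.1 hy.2).continuousAt.continuousWithinAt

theorem hom_hit_prob_general (γ a b : ℝ) (ha : 0 < a) (hab : a < b)
    (hb : b < 1) :
    let P : ℝ → ℝ := fun y => Shom a y / Shom a b
    P a = 0 ∧ P b = 1 ∧ StrictMonoOn P (Set.Icc a b) ∧
    ∀ y ∈ Set.Ioo a b, ∃ p' p'' : ℝ,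
      HasDerivAt P p' y ∧ HasDerivAt (deriv P) p'' y ∧
      -γ * y * p' + 2 * γ * y ^ 3 * (1 - y) * p'' = 0 := by
  intro P
  have hQ : ContinuousOn Qhom (Icc a b) := continuousOn_Qhom.mono (Icc_subset_Ioo ha hb)
  have hS : StrictMonoOn (Shom a) (Icc a b) := strictMonoOn_integral_of_pos hQ fun x hx =>
    Qhom_pos (ha.trans hx.1) (hx.2.trans hb)
  have hSab : 0 < Shom a b := by
    simpa [Shom] using hS (left_mem_Icc.2 hab.le) (right_mem_Icc.2 hab.le) hab
  refine ⟨by simp [P, Shom], div_self hSab.ne', fun x hx y hy hxy =>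
    div_lt_div_of_pos_right (hS hx hy hxy) hSab, fun y hy => ?_⟩
  have hy0 : 0 < y := ha.trans hy.1
  have hy1 : y < 1 := hy.2.trans hb
  refine ⟨_, _, (hasDerivAt_integral_of_continuousOn hQ hy).div_const (Shom a b),
    hasDerivAt_deriv_integral_div_const hQ (Shom a b) hy (hasDerivAt_Qhom hy0 hy1), ?_⟩
  have h1y : 1 - y ≠ 0 := by linarith
  field_simp
  ring

/-- P(y) = S(a,y)/S(a,b), the probability under optimal homodyne detection
that the excited state population starting from y ∈ [a,b] hits b before a,
satisfies P(a) = 0, P(b) = 1, is strictly increasing on [a,b], and solves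
the adjoint equation −γy P'(y) + 2γy³(1−y) P''(y) = 0 on (a,b). -/
theorem hom_hit_prob (γ a b : ℝ) (hγ : 0 < γ) (ha : 0 < a) (hab : a < b)
    (hb : b < 1) :
    let P : ℝ → ℝ := fun y => Shom a y / Shom a b
    P a = 0 ∧ P b = 1 ∧ StrictMonoOn P (Set.Icc a b) ∧
    ∀ y ∈ Set.Ioo a b, ∃ p' p'' : ℝ,
      HasDerivAt P p' y ∧ HasDerivAt (deriv P) p'' y ∧
      -γ * y * p' + 2 * γ * y ^ 3 * (1 - y) * p'' = 0 :=
  hom_hit_prob_general γ a b ha hab hb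
end

section
/- As u → 1⁻, (∫_0^u e^{-1/z}·z/(1−z) dz) / (−log(1−u)) tends to 1/e. Consequently, for fixed y ∈ (0,1), the excitation probability P_{T_u<∞}(y) = S(0,y)/S(0,u) satisfies −log(1−u)·P_{T_u<∞}(y) → e·S(0,y) as u → 1⁻; in particular P_{T_u<∞}(y) → 0 as u → 1⁻. -/
/-!
On `(0, 1)` the numerator `e^{-1/z} z` of `Q` stays within `1 - z` of its value `e^{-1}` at
`z = 1` (two tangent-line bounds for `exp`), so `Q(z) = e^{-1}/(1 - z) + O(1)` on `[0, 1)` and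
`S(0, u) = e^{-1} (-log (1 - u)) + O(1)`. Since `-log (1 - u) → ∞`, the other two limits follow
by inverting this one.
-/

/-- Heterodyne scale density Q(z) = e^{-1/z}·z/(1−z). -/
noncomputable def Qhet (z : ℝ) : ℝ := Real.exp (-1 / z) * z / (1 - z)

/-- Heterodyne scale integral S(u,v) = ∫_u^v Q(z) dz. -/
noncomputable def Shet (u v : ℝ) : ℝ := ∫ z in u..v, Qhet z

open Real Filter Set Topology intervalIntegral

lemma tendsto_neg_log_one_sub_nhdsLT_one :
    Tendsto (fun u : ℝ => -log (1 - u)) (𝓝[<] 1) atTop := by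
  have h : Tendsto (fun u : ℝ => 1 - u) (𝓝[<] 1) (𝓝[>] 0) := by
    refine tendsto_nhdsWithin_of_tendsto_nhds_of_eventually_within _ ?_ ?_
    · simpa using ((continuous_sub_left (1 : ℝ)).tendsto 1).mono_left nhdsWithin_le_nhds
    · filter_upwards [self_mem_nhdsWithin] with u (hu : u < 1) using sub_pos.2 hu
  exact tendsto_neg_atBot_atTop.comp (tendsto_log_nhdsGT_zero.comp h)

lemma integral_inv_one_sub {u : ℝ} (hu : u < 1) :
    ∫ z in (0 : ℝ)..u, (1 - z)⁻¹ = -log (1 - u) := by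
  rw [integral_comp_sub_left (fun x => x⁻¹), sub_zero,
    integral_inv (notMem_uIcc_of_lt (sub_pos.2 hu) one_pos), one_div, log_inv]

theorem tendsto_integral_div_neg_log_one_sub {f : ℝ → ℝ} {c M : ℝ}
    (hf : ContinuousOn f (Ico 0 1)) (hM : ∀ z ∈ Ioo 0 1, |f z - c / (1 - z)| ≤ M) :
    Tendsto (fun u => (∫ z in (0 : ℝ)..u, f z) / -log (1 - u)) (𝓝[<] 1) (𝓝 c) := by
  have hM0 : 0 ≤ M := (abs_nonneg _).trans (hM (1 / 2) ⟨by norm_num, by norm_num⟩)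
  set E : ℝ → ℝ := fun u => ∫ z in (0 : ℝ)..u, (f z - c / (1 - z))
  have hinv_cont : ContinuousOn (fun z : ℝ => c / (1 - z)) (Iio 1) :=
    continuousOn_const.div (continuous_const.sub continuous_id).continuousOn
      fun z hz => (sub_pos.2 hz).ne'
  have hdecomp : ∀ u ∈ Ioo (0 : ℝ) 1, ∫ z in (0 : ℝ)..u, f z = c * -log (1 - u) + E u := by
    intro u hu
    have hsub : uIcc 0 u ⊆ Ico 0 1 := by
      rw [uIcc_of_le hu.1.le]; exact Icc_subset_Ico_right hu.2
    simp only [E]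
    rw [integral_sub ((hf.mono hsub).intervalIntegrable)
      ((hinv_cont.mono (hsub.trans Ico_subset_Iio_self)).intervalIntegrable)]
    simp only [div_eq_mul_inv, intervalIntegral.integral_const_mul, integral_inv_one_sub hu.2]
    ring
  have hE : ∀ u ∈ Ioo (0 : ℝ) 1, |E u| ≤ M := by
    intro u hu
    calc |E u| = ‖E u‖ := (norm_eq_abs _).symm
      _ ≤ M * |u - 0| := norm_integral_le_of_norm_le_const fun z hz =>
          hM z (Ioc_subset_Ioo_right hu.2 (uIoc_of_le hu.1.le ▸ hz))
      _ ≤ M := mul_le_of_le_one_right hM0 (by rw [sub_zero, abs_of_pos hu.1]; exact hu.2.le)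
  have hIoo : ∀ᶠ u in 𝓝[<] (1 : ℝ), u ∈ Ioo 0 1 := Ioo_mem_nhdsLT one_pos
  have hlim := tendsto_const_nhds (x := c).add (tendsto_bdd_div_atTop_nhds_zero
    (hIoo.mono fun u hu => neg_le_of_abs_le (hE u hu))
    (hIoo.mono fun u hu => le_of_abs_le (hE u hu)) tendsto_neg_log_one_sub_nhdsLT_one)
  rw [add_zero] at hlim
  refine hlim.congr' ?_
  filter_upwards [hIoo, tendsto_neg_log_one_sub_nhdsLT_one.eventually_gt_atTop 0] with u hu hL
  rw [hdecomp u hu, add_div, mul_div_cancel_right₀ _ hL.ne']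

lemma exp_neg_inv_mul_le_exp_neg_one {z : ℝ} (h0 : 0 < z) (h1 : z ≤ 1) :
    exp (-z⁻¹) * z ≤ exp (-1) := by
  have hz : z ≤ exp (z⁻¹ - 1) := calc
    z ≤ z⁻¹ := h1.trans ((one_le_inv₀ h0).2 h1)
    _ ≤ exp (z⁻¹ - 1) := by linarith [add_one_le_exp (z⁻¹ - 1)]
  calc exp (-z⁻¹) * z ≤ exp (-z⁻¹) * exp (z⁻¹ - 1) := by gcongr
    _ = exp (-1) := by rw [← exp_add]; ring_nf

lemma exp_neg_one_sub_le_exp_neg_inv_mul {z : ℝ} (h0 : 0 < z) (h1 : z ≤ 1) :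
    exp (-1) - (1 - z) ≤ exp (-z⁻¹) * z := by
  have htwo : 2 * exp (-1) ≤ 1 := by
    rw [exp_neg, ← div_eq_mul_inv, div_le_one (exp_pos 1)]
    linarith [add_one_le_exp (1 : ℝ)]
  have htangent : exp (-1) * (2 - z⁻¹) ≤ exp (-z⁻¹) := calc
    exp (-1) * (2 - z⁻¹) ≤ exp (-1) * exp (1 - z⁻¹) := by
      gcongr; linarith [add_one_le_exp (1 - z⁻¹)]
    _ = exp (-z⁻¹) := by rw [← exp_add]; ring_nf
  have := mul_le_mul_of_nonneg_right htangent h0.le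
  rw [mul_assoc, sub_mul, inv_mul_cancel₀ h0.ne'] at this
  nlinarith

lemma Qhet_eq_expNegInvGlue {z : ℝ} (hz : 0 ≤ z) : Qhet z = expNegInvGlue z * z / (1 - z) := by
  rcases hz.eq_or_lt with rfl | hz
  · simp [Qhet]
  · rw [Qhet, expNegInvGlue, if_neg hz.not_ge, neg_div, one_div]

lemma continuousOn_Qhet : ContinuousOn Qhet (Ico 0 1) := by
  refine ContinuousOn.congr ?_ fun z hz => Qhet_eq_expNegInvGlue hz.1
  exact (((expNegInvGlue.contDiff (n := 0)).continuous.mul continuous_id).continuousOn).div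
    (continuous_const.sub continuous_id).continuousOn fun z hz => (sub_pos.2 hz.2).ne'

lemma abs_Qhet_sub_le_one {z : ℝ} (hz : z ∈ Ioo 0 1) : |Qhet z - exp (-1) / (1 - z)| ≤ 1 := by
  have h1z : 0 < 1 - z := sub_pos.2 hz.2
  rw [Qhet, neg_div, one_div, ← sub_div, abs_div, abs_of_pos h1z, div_le_one h1z, abs_le]
  constructor
  · linarith [exp_neg_one_sub_le_exp_neg_inv_mul hz.1 hz.2.le]
  · linarith [exp_neg_inv_mul_le_exp_neg_one hz.1 hz.2.le]

theorem tendsto_Shet_div_neg_log_one_sub :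
    Tendsto (fun u => Shet 0 u / -log (1 - u)) (𝓝[<] 1) (𝓝 (1 / exp 1)) := by
  rw [one_div, ← exp_neg]
  exact tendsto_integral_div_neg_log_one_sub continuousOn_Qhet fun z hz => abs_Qhet_sub_le_one hz

lemma tendsto_mul_div_of_tendsto_div {α : Type*} {l : Filter α} {S L : α → ℝ} {c : ℝ} (hc : c ≠ 0)
    (h : Tendsto (fun x => S x / L x) l (𝓝 c)) (a : ℝ) :
    Tendsto (fun x => L x * (a / S x)) l (𝓝 (c⁻¹ * a)) := by
  convert (h.inv₀ hc).mul_const a using 2 with x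
  rw [inv_div]; ring

/-- Asymptotics of the heterodyne excitation probability near full excitation:
S(0,u)/(−log(1−u)) → 1/e as u → 1⁻, hence for fixed y ∈ (0,1) the excitation
probability P_{T_u<∞}(y) = S(0,y)/S(0,u) satisfies
−log(1−u)·P_{T_u<∞}(y) → e·S(0,y), and in particular P_{T_u<∞}(y) → 0. -/
theorem het_excitation_prob_asymptotics :
    Filter.Tendsto (fun u => Shet 0 u / (-Real.log (1 - u)))
      (nhdsWithin 1 (Set.Iio 1)) (nhds (1 / Real.exp 1)) ∧
    ∀ y ∈ Set.Ioo (0 : ℝ) 1,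
      Filter.Tendsto (fun u => -Real.log (1 - u) * (Shet 0 y / Shet 0 u))
        (nhdsWithin 1 (Set.Iio 1)) (nhds (Real.exp 1 * Shet 0 y)) ∧
      Filter.Tendsto (fun u => Shet 0 y / Shet 0 u)
        (nhdsWithin 1 (Set.Iio 1)) (nhds 0) := by
  refine ⟨tendsto_Shet_div_neg_log_one_sub, fun y _ => ?_⟩
  have hscaled := tendsto_mul_div_of_tendsto_div (by positivity) tendsto_Shet_div_neg_log_one_sub
    (Shet 0 y)
  rw [one_div, inv_inv] at hscaled
  refine ⟨hscaled, (hscaled.div_atTop tendsto_neg_log_one_sub_nhdsLT_one).congr' ?_⟩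
  filter_upwards [tendsto_neg_log_one_sub_nhdsLT_one.eventually_gt_atTop 0] with u hL
  exact mul_div_cancel_left₀ _ hL.ne'
end
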